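/- arXiv:2408.08991 — 5 statements merged into one kernel-verified Lean document; each statement's English description precedes it below -/
import Mathlib

section
/- Let m ≥ 1 and let M be an m × m integer matrix with det M ≠ 0. Then the monomial map Φ_M : (ℂˣ)^m → (ℂˣ)^m defined by Φ_M(t)_j = ∏_{i=1}^m t_i^{M_{ij}} is a covering map (with respect to the product of the subspace topologies on ℂˣ ⊂ ℂ). -/
/-!
Writing `E : ℂ^m → (ℂˣ)^m` for the coordinatewise exponential, `Φ_M ∘ E = E ∘ (· ᵥ* M)`. Since `E`
is an open surjection and `M` is invertible over `ℂ`, the continuous homomorphism `Φ_M` is an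
open surjection, hence a quotient map of topological groups. Its kernel is finite: from
`M * adj M = det M • 1` one gets `Φ_{adj M} ∘ Φ_M = (·) ^ det M`, so the kernel consists of
`det M`-th roots of unity. A quotient homomorphism with discrete kernel is a covering map.
-/

open Function Topology

section MonomialHom

variable {G : Type*} [CommGroup G] {ι κ ν : Type*} [Fintype ι]

def monomialHom (M : Matrix ι κ ℤ) : (ι → G) →* (κ → G) where
  toFun t j := ∏ i, t i ^ M i j
  map_one' := by ext; simp
  map_mul' s t := by ext; simp only [Pi.mul_apply, mul_zpow, Finset.prod_mul_distrib]

theorem monomialHom_apply (M : Matrix ι κ ℤ) (t : ι → G) (j : κ) :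
    monomialHom M t j = ∏ i, t i ^ M i j := rfl

theorem monomialHom_monomialHom [Fintype κ] (M : Matrix ι κ ℤ) (N : Matrix κ ν ℤ) (t : ι → G) :
    monomialHom N (monomialHom M t) = monomialHom (M * N) t := by
  have zpow_sum (g : G) (f : κ → ℤ) : g ^ (∑ j, f j) = ∏ j, g ^ f j :=
    map_sum (zpowersHom G g).toAdditiveRight f Finset.univ
  ext k
  simp only [monomialHom_apply, Matrix.mul_apply, zpow_sum, zpow_mul, ← Finset.prod_zpow]
  exact Finset.prod_comm

theorem monomialHom_smul_one [DecidableEq ι] (d : ℤ) (t : ι → G) :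
    monomialHom (d • (1 : Matrix ι ι ℤ)) t = t ^ d := by
  ext k
  simp only [monomialHom_apply, Matrix.smul_apply, Matrix.one_apply, smul_eq_mul, mul_ite, mul_one,
    mul_zero]
  simp

theorem ker_monomialHom_le [DecidableEq ι] (M : Matrix ι ι ℤ) :
    (monomialHom M : (ι → G) →* (ι → G)).ker ≤ (zpowGroupHom M.det).ker := by
  intro t ht
  rw [MonoidHom.mem_ker] at ht ⊢
  rw [zpowGroupHom_apply, ← monomialHom_smul_one, ← Matrix.mul_adjugate,
    ← monomialHom_monomialHom, ht, map_one]

end MonomialHom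

open Matrix

namespace Complex

noncomputable def expUnits (z : ℂ) : ℂˣ := Units.mk0 (exp z) (exp_ne_zero z)

@[simp] theorem val_expUnits (z : ℂ) : (expUnits z : ℂ) = exp z := rfl

theorem isOpenQuotientMap_expUnits : IsOpenQuotientMap expUnits := by
  have hval : Units.val ∘ expUnits = exp := rfl
  refine ⟨fun u => ?_, ?_, ?_⟩
  · obtain ⟨z, hz⟩ := (Set.ext_iff.mp range_exp (u : ℂ)).mpr u.ne_zero
    exact ⟨z, Units.ext hz⟩
  · rw [Units.isOpenEmbedding_val.isEmbedding.continuous_iff, hval]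
    exact continuous_exp
  · rw [Units.isOpenEmbedding_val.isOpenMap_iff, hval]
    exact isOpenMap_exp

end Complex

theorem Matrix.isOpenQuotientMap_vecMul {𝕜 : Type*} [NontriviallyNormedField 𝕜] [CompleteSpace 𝕜]
    {ι : Type*} [Fintype ι] [DecidableEq ι] (A : Matrix ι ι 𝕜) (hA : IsUnit A.det) :
    IsOpenQuotientMap (fun x : ι → 𝕜 => x ᵥ* A) := by
  have hsurj : Surjective (vecMulLinear A) :=
    vecMul_surjective_iff_isUnit.mpr ((isUnit_iff_isUnit_det A).mpr hA)
  exact ⟨hsurj, (vecMulLinear A).continuous_of_finiteDimensional,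
    (vecMulLinear A).isOpenMap_of_finiteDimensional hsurj⟩

open Complex in
theorem monomialHom_comp_expUnits {ι κ : Type*} [Fintype ι] (M : Matrix ι κ ℤ) :
    monomialHom M ∘ Pi.map (fun _ => expUnits) =
      Pi.map (fun _ => expUnits) ∘ fun x : ι → ℂ => x ᵥ* M.map (Int.cast : ℤ → ℂ) := by
  ext x j
  simp [monomialHom_apply, vecMul, dotProduct, exp_sum, ← exp_int_mul, mul_comm]

theorem finite_setOf_zpow_eq_one {R : Type*} [CommRing R] [IsDomain R] {ι : Type*} [Finite ι]
    {d : ℤ} (hd : d ≠ 0) : {t : ι → Rˣ | t ^ d = 1}.Finite := by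
  have : NeZero d.natAbs := ⟨Int.natAbs_ne_zero.mpr hd⟩
  refine (Set.finite_range fun s : ι → rootsOfUnity d.natAbs R => fun i => (s i : Rˣ)).subset
    fun t ht => ⟨fun i => ⟨t i, ?_⟩, rfl⟩
  rw [mem_rootsOfUnity, pow_natAbs_eq_one]
  exact congrFun ht i

section ComplexTorus

variable {ι : Type*} [Fintype ι] [DecidableEq ι] {M : Matrix ι ι ℤ}

theorem isOpenQuotientMap_monomialHom (hM : M.det ≠ 0) :
    IsOpenQuotientMap (monomialHom M : (ι → ℂˣ) → (ι → ℂˣ)) := by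
  have hexp : IsOpenQuotientMap (Pi.map fun _ : ι => Complex.expUnits) :=
    .piMap fun _ => Complex.isOpenQuotientMap_expUnits
  have hdet : IsUnit (M.map (Int.cast : ℤ → ℂ)).det := by
    rw [← Int.cast_det]
    exact isUnit_iff_ne_zero.mpr (Int.cast_ne_zero.mpr hM)
  rw [← hexp.of_comp_iff, monomialHom_comp_expUnits]
  exact hexp.comp (isOpenQuotientMap_vecMul _ hdet)

theorem isDiscrete_ker_monomialHom (hM : M.det ≠ 0) :
    IsDiscrete ((monomialHom M : (ι → ℂˣ) →* (ι → ℂˣ)).ker : Set (ι → ℂˣ)) :=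
  ((finite_setOf_zpow_eq_one hM).subset (ker_monomialHom_le M)).isDiscrete

theorem isCoveringMap_monomialHom (hM : M.det ≠ 0) :
    IsCoveringMap (monomialHom M : (ι → ℂˣ) → (ι → ℂˣ)) :=
  (isOpenQuotientMap_monomialHom hM).isQuotientMap
    |>.isQuotientCoveringMap_of_isDiscrete_ker_monoidHom (isDiscrete_ker_monomialHom hM)
    |>.isCoveringMap

end ComplexTorus

theorem stmt1_general (m : ℕ) (M : Matrix (Fin m) (Fin m) ℤ) (hM : M.det ≠ 0)
    (Φ : (Fin m → ℂˣ) → (Fin m → ℂˣ))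
    (hΦ : Φ = fun t => fun j => ∏ i, t i ^ M i j) :
    IsCoveringMap Φ ∧ Function.Surjective Φ := by
  subst hΦ
  exact ⟨isCoveringMap_monomialHom hM, (isOpenQuotientMap_monomialHom hM).surjective⟩

/-- Let `m ≥ 1` and let `M` be an `m × m` integer matrix with `det M ≠ 0`.
Then the monomial map `Φ_M : (ℂˣ)^m → (ℂˣ)^m`, `Φ_M(t)_j = ∏ i, t i ^ M i j`, is a covering
map (a continuous surjection which is evenly covered over a neighborhood of each point). -/
theorem stmt1 (m : ℕ) (hm : 1 ≤ m) (M : Matrix (Fin m) (Fin m) ℤ) (hM : M.det ≠ 0)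
    (Φ : (Fin m → ℂˣ) → (Fin m → ℂˣ))
    (hΦ : Φ = fun t => fun j => ∏ i, t i ^ M i j) :
    IsCoveringMap Φ ∧ Function.Surjective Φ :=
  stmt1_general m M hM Φ hΦ
end

section
/- Let a(1), …, a(N) ∈ ℤ^ν and let Φ_A : (ℂˣ)^ν → (ℂˣ)^N be the monomial map Φ_A(t)_j = t^{a(j)} = ∏_{i=1}^ν t_i^{a_i(j)}. Then the image of Φ_A equals the binomial subgroup {x ∈ (ℂˣ)^N : for every u ∈ ℤ^N with ∑_{j=1}^N u_j · a(j) = 0 (as a vector in ℤ^ν), one has ∏_{j=1}^N x_j^{u_j} = 1}. -/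
/-!
Writing the character `u ↦ ∏ j, x j ^ u j` of `ℤ^κ` additively, a point `x` lies in the image
of the monomial map iff its character factors through the linear map `A : u ↦ ∑ j, u j • a j`,
since the characters of `ℤ^ι` are exactly the monomials `b ↦ ∏ i, t i ^ b i`. The binomial
relations say that the character vanishes on `ker A`; it then factors through
`ℤ^κ ⧸ ker A ↪ ℤ^ι` and extends to `ℤ^ι` because `ℂˣ` is divisible, hence an injective
`ℤ`-module.
-/

open Function

noncomputable instance Units.rootableByInt_of_isAlgClosed (K : Type*) [Field K] [IsAlgClosed K] :
    RootableBy Kˣ ℤ :=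
  haveI : RootableBy Kˣ ℕ := rootableByOfPowLeftSurj _ _ fun {n} hn x => by
    obtain ⟨z, hz⟩ := IsAlgClosed.exists_pow_nat_eq (x : K) (Nat.pos_of_ne_zero hn)
    have hz0 : z ≠ 0 := by rintro rfl; exact x.ne_zero (by simpa [zero_pow hn] using hz.symm)
    exact ⟨Units.mk0 z hz0, Units.ext (by simpa using hz)⟩
  Group.rootableByIntOfRootableByNat _

instance Additive.divisibleBy {G : Type*} [CommGroup G] [RootableBy G ℤ] :
    DivisibleBy (Additive G) ℤ where
  div x n := Additive.ofMul (RootableBy.root x.toMul n)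
  div_zero x := RootableBy.root_zero x.toMul
  div_cancel x hn := RootableBy.root_cancel x.toMul hn

theorem Module.Baer.exists_comp_eq_of_ker_le {R Q M N : Type*} [Ring R] [AddCommGroup Q]
    [Module R Q] [AddCommGroup M] [Module R M] [AddCommGroup N] [Module R N]
    (hQ : Module.Baer R Q) (f : M →ₗ[R] N) (g : M →ₗ[R] Q)
    (hfg : LinearMap.ker f ≤ LinearMap.ker g) :
    ∃ h : N →ₗ[R] Q, h ∘ₗ f = g := by
  obtain ⟨h, hh⟩ := hQ.extension_property ((LinearMap.ker f).liftQ f le_rfl)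
    (LinearMap.ker_eq_bot.mp (Submodule.ker_liftQ_eq_bot _ _ _ le_rfl))
    ((LinearMap.ker f).liftQ g hfg)
  refine ⟨h, LinearMap.ext fun m => ?_⟩
  simpa using congr($hh (Submodule.Quotient.mk m))

section MonomialChar

variable {G ι κ : Type*} [CommGroup G] [Fintype ι] [Fintype κ]

noncomputable def monomialChar (t : ι → G) : (ι → ℤ) →ₗ[ℤ] Additive G :=
  Fintype.linearCombination ℤ (Additive.ofMul ∘ t)

theorem toMul_monomialChar (t : ι → G) (b : ι → ℤ) :
    (monomialChar t b).toMul = ∏ i, t i ^ b i := by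
  simp [monomialChar, Fintype.linearCombination_apply, toMul_sum]

theorem monomialChar_single [DecidableEq ι] (t : ι → G) (i : ι) :
    monomialChar t (Pi.single i 1) = Additive.ofMul (t i) := by
  simp [monomialChar]

theorem monomialChar_injective : Injective (monomialChar : (ι → G) → _) := by
  classical
  intro s t hst
  funext i
  simpa [monomialChar_single] using congr($hst (Pi.single i 1))

theorem monomialChar_toMul_single [DecidableEq ι] (ψ : (ι → ℤ) →ₗ[ℤ] Additive G) :
    monomialChar (fun i => (ψ (Pi.single i 1)).toMul) = ψ :=
  (Pi.basisFun ℤ ι).ext fun i => by simp [monomialChar_single]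

theorem monomialChar_monomial_eq_comp (a : κ → ι → ℤ) (t : ι → G) :
    monomialChar (fun j => ∏ i, t i ^ a j i) =
      monomialChar t ∘ₗ Fintype.linearCombination ℤ a := by
  classical
  refine (Pi.basisFun ℤ κ).ext fun j => ?_
  simp only [Pi.basisFun_apply, LinearMap.comp_apply, monomialChar_single,
    Fintype.linearCombination_apply_single, one_smul, ← toMul_monomialChar, ofMul_toMul]

theorem range_monomial_eq [RootableBy G ℤ] (a : κ → ι → ℤ) :
    Set.range (fun t : ι → G => fun j => ∏ i, t i ^ a j i) =
      {x | ∀ u : κ → ℤ, ∑ j, u j • a j = 0 → ∏ j, x j ^ u j = 1} := by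
  classical
  ext x
  constructor
  · rintro ⟨t, rfl⟩ u hu
    rw [← toMul_monomialChar, monomialChar_monomial_eq_comp, LinearMap.comp_apply,
      Fintype.linearCombination_apply, hu, map_zero, toMul_zero]
  · intro hx
    have hker :
        LinearMap.ker (Fintype.linearCombination ℤ a) ≤ LinearMap.ker (monomialChar x) :=
      fun u hu => by simpa [← toMul_monomialChar] using hx u hu
    obtain ⟨ψ, hψ⟩ :=
      (Module.Baer.of_divisible (Additive G)).exists_comp_eq_of_ker_le _ _ hker
    refine ⟨fun i => (ψ (Pi.single i 1)).toMul, monomialChar_injective ?_⟩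
    rw [monomialChar_monomial_eq_comp, monomialChar_toMul_single, hψ]

end MonomialChar

/-- Let `a 1, …, a N ∈ ℤ^ν` and let `Φ_A : (ℂˣ)^ν → (ℂˣ)^N` be the monomial
map `Φ_A(t)_j = ∏ i, t i ^ a j i`. Then the image of `Φ_A` equals the binomial subgroup
`{x : ∀ u ∈ ℤ^N with ∑ j, u j • a j = 0, ∏ j, x j ^ u j = 1}`. -/
theorem stmt5 (ν N : ℕ) (a : Fin N → Fin ν → ℤ) :
    Set.range (fun t : Fin ν → ℂˣ => fun j => ∏ i, t i ^ a j i) =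
      {x : Fin N → ℂˣ |
        ∀ u : Fin N → ℤ, ∑ j, u j • a j = (0 : Fin ν → ℤ) → ∏ j, x j ^ u j = 1} :=
  range_monomial_eq a
end

section
/- Let a(1), …, a(n+m) ∈ ℤ^ν and suppose the parameter exponent vectors a(n+1), …, a(n+m) span ℚ^ν over ℚ. Let X* := {(x, c) ∈ (ℂˣ)^n × (ℂˣ)^m : ∃ t ∈ (ℂˣ)^ν with x_i = t^{a(i)} for i = 1,…,n and c_j = t^{a(n+j)} for j = 1,…,m}, and let F : X* → (ℂˣ)^m be the restriction of the coordinate projection (x, c) ↦ c. Then F is a proper map, i.e., preimages of compact sets are compact (equivalently, F is a proper map in the topological sense), where X* carries the subspace topology from ℂ^{n+m} and (ℂˣ)^m the subspace topology from ℂ^m. -/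
/-!
If the exponent vectors `a (n+j)` of the parameters span `ℚ^ν`, then every unit vector `e_l` is a
rational combination `∑ q_j a (n+j)`, so `log ‖t_l‖ = ∑ q_j log ‖c_j‖` on `X*`. When `c` ranges over
a compact subset of `(ℂˣ)^m`, the right-hand side is bounded, so `t` ranges over a compact subset
of `(ℂˣ)^ν`; the fibre of `F` over the compact set is the continuous image of that set.
-/

open Set

variable {𝕜 ι κ : Type*} [NormedField 𝕜] [Fintype κ]

def monomialMap (A : ι → κ → ℤ) (t : κ → 𝕜) : ι → 𝕜 :=
  fun j => ∏ l, t l ^ A j l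

lemma monomialMap_ne_zero (A : ι → κ → ℤ) {t : κ → 𝕜} (ht : ∀ l, t l ≠ 0) (j : ι) :
    monomialMap A t j ≠ 0 :=
  Finset.prod_ne_zero_iff.2 fun l _ => zpow_ne_zero _ (ht l)

lemma continuousOn_monomialMap (A : ι → κ → ℤ) :
    ContinuousOn (monomialMap (𝕜 := 𝕜) A) {t | ∀ l, t l ≠ 0} :=
  continuousOn_pi.2 fun _ => continuousOn_finsetProd _ fun l _ =>
    (continuous_apply l).continuousOn.zpow₀ _ fun _ ht => Or.inl (ht l)

lemma log_norm_monomialMap (A : ι → κ → ℤ) {t : κ → 𝕜} (ht : ∀ l, t l ≠ 0) (j : ι) :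
    Real.log ‖monomialMap A t j‖ = ∑ l, A j l * Real.log ‖t l‖ := by
  rw [monomialMap, norm_prod, Real.log_prod fun l _ => norm_ne_zero_iff.2 (zpow_ne_zero _ (ht l))]
  simp only [norm_zpow, Real.log_zpow]

lemma exists_log_norm_eq_sum_log_norm_monomialMap [Fintype ι] {A : ι → κ → ℤ}
    (hA : Submodule.span ℚ (range fun j l => (A j l : ℚ)) = ⊤) (l : κ) :
    ∃ q : ι → ℝ, ∀ t : κ → 𝕜, (∀ l, t l ≠ 0) →
      Real.log ‖t l‖ = ∑ j, q j * Real.log ‖monomialMap A t j‖ := by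
  classical
  obtain ⟨q, hq⟩ := (Submodule.mem_span_range_iff_exists_fun ℚ).1
    (hA ▸ Submodule.mem_top : (Pi.single l 1 : κ → ℚ) ∈ _)
  have hcoeff : ∀ l', ∑ j, (q j : ℝ) * A j l' = if l' = l then 1 else 0 := fun l' => by
    have := congrArg (Rat.cast : ℚ → ℝ) (congrFun hq l')
    simp only [Finset.sum_apply, Pi.smul_apply, smul_eq_mul, Pi.single_apply] at this
    push_cast [apply_ite] at this
    split_ifs at this ⊢ <;> exact this
  refine ⟨fun j => q j, fun t ht => ?_⟩
  simp_rw [log_norm_monomialMap A ht, Finset.mul_sum, ← mul_assoc]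
  rw [Finset.sum_comm]
  simp_rw [← Finset.sum_mul, hcoeff, ite_mul, one_mul, zero_mul, Finset.sum_ite_eq',
    Finset.mem_univ, if_true]

lemma isCompact_norm_preimage_Icc {E : Type*} [SeminormedAddCommGroup E] [ProperSpace E]
    (r R : ℝ) : IsCompact (norm ⁻¹' Icc r R : Set E) :=
  (isCompact_closedBall 0 R).of_isClosed_subset (isClosed_Icc.preimage continuous_norm)
    fun _ hz => mem_closedBall_zero_iff.2 hz.2

theorem isCompact_monomialMap_preimage [Fintype ι] [ProperSpace 𝕜] {A : ι → κ → ℤ}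
    (hA : Submodule.span ℚ (range fun j l => (A j l : ℚ)) = ⊤)
    {K : Set (ι → 𝕜)} (hK : IsCompact K) (hK0 : ∀ c ∈ K, ∀ j, c j ≠ 0) :
    IsCompact {t : κ → 𝕜 | (∀ l, t l ≠ 0) ∧ monomialMap A t ∈ K} := by
  choose q hq using exists_log_norm_eq_sum_log_norm_monomialMap (𝕜 := 𝕜) hA
  have hlog : ContinuousOn (fun c l => ∑ j, q l j * Real.log ‖c j‖) K :=
    continuousOn_pi.2 fun l => continuousOn_finsetSum _ fun j _ => continuousOn_const.mul <|
      (continuous_apply j).norm.continuousOn.log fun c hc => norm_ne_zero_iff.2 (hK0 c hc j)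
  obtain ⟨R, hR⟩ := hK.exists_bound_of_continuousOn hlog
  set Q : Set (κ → 𝕜) := univ.pi fun _ => norm ⁻¹' Icc (Real.exp (-R)) (Real.exp R)
  have hQ : IsCompact Q := isCompact_univ_pi fun _ => isCompact_norm_preimage_Icc _ _
  have hQ0 : Q ⊆ {t | ∀ l, t l ≠ 0} := fun t ht l =>
    norm_pos_iff.1 ((Real.exp_pos _).trans_le (ht l trivial).1)
  have hfibre :
      {t : κ → 𝕜 | (∀ l, t l ≠ 0) ∧ monomialMap A t ∈ K} = Q ∩ monomialMap A ⁻¹' K := by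
    ext t
    refine ⟨fun ⟨ht, htK⟩ => ⟨fun l _ => ?_, htK⟩, fun ⟨htQ, htK⟩ => ⟨hQ0 htQ, htK⟩⟩
    have hpos : 0 < ‖t l‖ := norm_pos_iff.2 (ht l)
    have hbound : |Real.log ‖t l‖| ≤ R := by
      rw [hq l t ht]
      exact (norm_le_pi_norm (fun l => ∑ j, q l j * Real.log ‖monomialMap A t j‖) l).trans
        (hR _ htK)
    exact ⟨(Real.le_log_iff_exp_le hpos).1 (neg_le_of_abs_le hbound),
      (Real.log_le_iff_le_exp hpos).1 (le_of_abs_le hbound)⟩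
  rw [hfibre]
  refine hQ.of_isClosed_subset ?_ inter_subset_left
  exact ((continuousOn_monomialMap A).mono hQ0).preimage_isClosed_of_isClosed hQ.isClosed
    hK.isClosed

/-- Let `a 1, …, a (n+m) ∈ ℤ^ν` with the parameter exponent vectors
`a (n+1), …, a (n+m)` spanning `ℚ^ν` over `ℚ`. Let
`X* = {(x,c) ∈ (ℂˣ)^n × (ℂˣ)^m : ∃ t ∈ (ℂˣ)^ν, x i = t ^ a i, c j = t ^ a (n+j)}` and let
`F : X* → (ℂˣ)^m` be the restriction of `(x,c) ↦ c`.  Then `F` is continuous and proper: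
preimages of compact subsets of `(ℂˣ)^m` are compact (in the subspace topologies). -/
theorem stmt7 (ν n m : ℕ) (a : Fin (n + m) → Fin ν → ℤ)
    (hspan : Submodule.span ℚ
      (Set.range fun j : Fin m => fun i : Fin ν => (a (Fin.natAdd n j) i : ℚ)) = ⊤)
    (Xstar : Set ((Fin n → ℂ) × (Fin m → ℂ)))
    (hX : Xstar = {p | (∀ i, p.1 i ≠ 0) ∧ (∀ j, p.2 j ≠ 0) ∧
      ∃ t : Fin ν → ℂ, (∀ l, t l ≠ 0) ∧
        (∀ i, p.1 i = ∏ l, t l ^ a (Fin.castAdd m i) l) ∧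
        (∀ j, p.2 j = ∏ l, t l ^ a (Fin.natAdd n j) l)}) :
    Continuous (fun p : Xstar => (p : (Fin n → ℂ) × (Fin m → ℂ)).2) ∧
    ∀ K : Set (Fin m → ℂ), (∀ c ∈ K, ∀ j, c j ≠ 0) → IsCompact K →
      IsCompact {p : Xstar | (p : (Fin n → ℂ) × (Fin m → ℂ)).2 ∈ K} := by
  refine ⟨by fun_prop, fun K hK0 hK => ?_⟩
  set x := monomialMap (𝕜 := ℂ) fun i => a (Fin.castAdd m i)
  set c := monomialMap (𝕜 := ℂ) fun j => a (Fin.natAdd n j)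
  have hfibre : Subtype.val '' {p : Xstar | (p : (Fin n → ℂ) × (Fin m → ℂ)).2 ∈ K} =
      (fun t => (x t, c t)) '' {t | (∀ l, t l ≠ 0) ∧ c t ∈ K} := by
    ext p
    constructor
    · rintro ⟨⟨p, hp⟩, hpK, rfl⟩
      rw [hX] at hp
      obtain ⟨-, -, t, ht, hx, hc⟩ := hp
      obtain rfl : p = (x t, c t) := Prod.ext (funext hx) (funext hc)
      exact ⟨t, ⟨ht, hpK⟩, rfl⟩
    · rintro ⟨t, ⟨ht, htK⟩, rfl⟩
      refine ⟨⟨(x t, c t), hX ▸ ?_⟩, htK, rfl⟩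
      exact ⟨monomialMap_ne_zero _ ht, monomialMap_ne_zero _ ht, t, ht, fun _ => rfl, fun _ => rfl⟩
  rw [Subtype.isCompact_iff, hfibre]
  exact (isCompact_monomialMap_preimage hspan hK hK0).image_of_continuousOn
    (((continuousOn_monomialMap _).prodMk (continuousOn_monomialMap _)).mono fun _ ht => ht.1)
end

section
/- Let a(1), …, a(n+m) ∈ ℤ^ν and suppose the parameter exponent vectors a(n+1), …, a(n+m) span ℚ^ν over ℚ. Let X* := {(x, c) ∈ (ℝ_{>0})^n × (ℝ_{>0})^m : ∃ t ∈ (ℝ_{>0})^ν with x_i = t^{a(i)} for i = 1,…,n and c_j = t^{a(n+j)} for j = 1,…,m}, and let F : X* → (ℝ_{>0})^m be the restriction of the coordinate projection (x, c) ↦ c. Then F is a proper map, i.e., preimages of compact sets are compact, where X* carries the subspace topology from ℝ^{n+m} and (ℝ_{>0})^m the subspace topology from ℝ^m. -/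
/-!
Writing `t = exp τ`, the set `X*` is the image of `ℝ^ν` under `τ ↦ (exp (A τ), exp (B τ))`,
where `A` and `B` are the integer matrices whose rows are the exponent vectors. Since the rows
of `B` span `ℚ^ν`, `B` has a rational left inverse, so `τ ↦ B τ` is injective, hence a closed
embedding of `ℝ^ν` into `ℝ^m`. A point of `X*` lies over `K` exactly when its parameter `τ`
satisfies `B τ ∈ log K`; this set of parameters is the preimage of the compact set `log K`
under a closed embedding, hence compact, and its image under the continuous parametrization is
the fibre over `K`.
-/

open Real Set Matrix

section
variable {ι κ : Type*}

theorem Matrix.mulVec_map_intCast_injective_of_span_eq_top [Fintype ι] [Fintype κ]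
    {B : Matrix κ ι ℤ} (h : Submodule.span ℚ (range (B.map ((↑) : ℤ → ℚ))) = ⊤) :
    Function.Injective (B.map ((↑) : ℤ → ℝ)).mulVec := by
  classical
  intro τ σ hτσ
  funext l
  obtain ⟨q, hq⟩ := (Submodule.mem_span_range_iff_exists_fun ℚ).1
    (h ▸ Submodule.mem_top : Pi.single l (1 : ℚ) ∈ _)
  -- `q` is the `l`-th row of a rational left inverse of `B`.
  have hrow : (fun j => (q j : ℝ)) ᵥ* B.map ((↑) : ℤ → ℝ) = Pi.single l 1 := by
    funext i
    have := congrArg (fun v : ι → ℚ => (v i : ℝ)) hq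
    simpa [vecMul, dotProduct, Pi.single_apply, apply_ite] using this
  have hcoord (τ : ι → ℝ) : (fun j => (q j : ℝ)) ⬝ᵥ (B.map (↑) *ᵥ τ) = τ l := by
    rw [dotProduct_mulVec, hrow, single_one_dotProduct]
  rw [← hcoord τ, hτσ, hcoord]

theorem Real.prod_zpow_eq_exp_sum [Fintype ι] (b : ι → ℤ) {t : ι → ℝ} (ht : ∀ l, 0 < t l) :
    ∏ l, t l ^ b l = exp (∑ l, b l * log (t l)) := by
  rw [exp_sum]
  refine Finset.prod_congr rfl fun l _ => ?_
  rw [mul_comm, exp_mul, exp_log (ht l), rpow_intCast]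

theorem Matrix.exp_comp_mulVec_log_comp [Fintype ι] (M : Matrix κ ι ℤ) {t : ι → ℝ}
    (ht : ∀ l, 0 < t l) :
    exp ∘ (M.map ((↑) : ℤ → ℝ) *ᵥ (log ∘ t)) = fun j => ∏ l, t l ^ M j l := by
  funext j
  simp [mulVec, dotProduct, prod_zpow_eq_exp_sum _ ht]

theorem setOf_prod_zpow_eq_range [Fintype ι] {ι' : Type*} (A : Matrix ι' ι ℤ)
    (B : Matrix κ ι ℤ) :
    {p : (ι' → ℝ) × (κ → ℝ) | (∀ i, 0 < p.1 i) ∧ (∀ j, 0 < p.2 j) ∧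
      ∃ t : ι → ℝ, (∀ l, 0 < t l) ∧
        (∀ i, p.1 i = ∏ l, t l ^ A i l) ∧ (∀ j, p.2 j = ∏ l, t l ^ B j l)} =
      range fun τ => (exp ∘ (A.map (↑) *ᵥ τ), exp ∘ (B.map (↑) *ᵥ τ)) := by
  ext p
  constructor
  · rintro ⟨-, -, t, ht, hA, hB⟩
    refine ⟨log ∘ t, ?_⟩
    dsimp only
    rw [A.exp_comp_mulVec_log_comp ht, B.exp_comp_mulVec_log_comp ht]
    exact Prod.ext (funext fun i => (hA i).symm) (funext fun j => (hB j).symm)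
  · rintro ⟨τ, rfl⟩
    have hlog : log ∘ exp ∘ τ = τ := funext fun l => log_exp (τ l)
    have ht : ∀ l, 0 < (exp ∘ τ) l := fun l => exp_pos (τ l)
    refine ⟨fun i => exp_pos _, fun j => exp_pos _, exp ∘ τ, ht, fun i => ?_, fun j => ?_⟩
    · simpa only [hlog] using congrFun (A.exp_comp_mulVec_log_comp ht) i
    · simpa only [hlog] using congrFun (B.exp_comp_mulVec_log_comp ht) j

theorem exp_comp_mem_iff_mem_image_log_comp {K : Set (κ → ℝ)} (hKpos : ∀ c ∈ K, ∀ j, 0 < c j)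
    (u : κ → ℝ) :
    exp ∘ u ∈ K ↔ u ∈ (log ∘ ·) '' K := by
  constructor
  · intro hu
    exact ⟨exp ∘ u, hu, funext fun j => log_exp (u j)⟩
  · rintro ⟨c, hc, rfl⟩
    convert hc
    funext j
    exact exp_log (hKpos c hc j)

theorem isCompact_image_log_comp {K : Set (κ → ℝ)} (hKpos : ∀ c ∈ K, ∀ j, 0 < c j)
    (hK : IsCompact K) : IsCompact ((log ∘ ·) '' K) :=
  hK.image_of_continuousOn <| continuousOn_pi.2 fun j =>
    continuousOn_log.comp (continuous_apply j).continuousOn fun c hc => (hKpos c hc j).ne'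

theorem isCompact_range_inter_snd_preimage [Fintype ι] {Y : Type*} [TopologicalSpace Y]
    {f : (ι → ℝ) → Y} (hf : Continuous f) {B : Matrix κ ι ℝ} (hB : Function.Injective B.mulVec)
    {K : Set (κ → ℝ)} (hKpos : ∀ c ∈ K, ∀ j, 0 < c j) (hK : IsCompact K) :
    IsCompact (range (fun τ => (f τ, exp ∘ (B *ᵥ τ))) ∩ Prod.snd ⁻¹' K) := by
  have hBemb : Topology.IsClosedEmbedding B.mulVecLin :=
    LinearMap.isClosedEmbedding_of_injective (LinearMap.ker_eq_bot.2 hB)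
  have hpre : IsCompact (B.mulVec ⁻¹' ((log ∘ ·) '' K)) :=
    hBemb.isCompact_preimage (isCompact_image_log_comp hKpos hK)
  convert hpre.image (f := fun τ => (f τ, exp ∘ (B *ᵥ τ))) (by fun_prop) using 1
  ext p
  simp only [mem_inter_iff, mem_range, mem_preimage, mem_image,
    ← exp_comp_mem_iff_mem_image_log_comp hKpos]
  constructor
  · rintro ⟨⟨τ, rfl⟩, hτ⟩
    exact ⟨τ, hτ, rfl⟩
  · rintro ⟨τ, hτ, rfl⟩
    exact ⟨⟨τ, rfl⟩, hτ⟩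

end

/-- Real-positive analogue of Statement 7: with the parameter exponent
vectors `a (n+1), …, a (n+m)` spanning `ℚ^ν`, the restriction of the projection
`(x,c) ↦ c` to `X* ⊂ (ℝ_{>0})^n × (ℝ_{>0})^m` is continuous and proper: preimages of
compact subsets of `(ℝ_{>0})^m` are compact (in the subspace topologies). -/
theorem stmt8 (ν n m : ℕ) (a : Fin (n + m) → Fin ν → ℤ)
    (hspan : Submodule.span ℚ
      (Set.range fun j : Fin m => fun i : Fin ν => (a (Fin.natAdd n j) i : ℚ)) = ⊤)
    (Xstar : Set ((Fin n → ℝ) × (Fin m → ℝ)))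
    (hX : Xstar = {p | (∀ i, 0 < p.1 i) ∧ (∀ j, 0 < p.2 j) ∧
      ∃ t : Fin ν → ℝ, (∀ l, 0 < t l) ∧
        (∀ i, p.1 i = ∏ l, t l ^ a (Fin.castAdd m i) l) ∧
        (∀ j, p.2 j = ∏ l, t l ^ a (Fin.natAdd n j) l)}) :
    Continuous (fun p : Xstar => (p : (Fin n → ℝ) × (Fin m → ℝ)).2) ∧
    ∀ K : Set (Fin m → ℝ), (∀ c ∈ K, ∀ j, 0 < c j) → IsCompact K →
      IsCompact {p : Xstar | (p : (Fin n → ℝ) × (Fin m → ℝ)).2 ∈ K} := by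
  set A : Matrix (Fin n) (Fin ν) ℤ := .of fun i => a (Fin.castAdd m i)
  set B : Matrix (Fin m) (Fin ν) ℤ := .of fun j => a (Fin.natAdd n j)
  have hB : Function.Injective (B.map ((↑) : ℤ → ℝ)).mulVec :=
    Matrix.mulVec_map_intCast_injective_of_span_eq_top hspan
  have hXrange := hX.trans (setOf_prod_zpow_eq_range A B)
  refine ⟨by fun_prop, fun K hKpos hK => ?_⟩
  change IsCompact (Subtype.val ⁻¹' (Prod.snd ⁻¹' K))
  rw [Topology.IsEmbedding.subtypeVal.isCompact_iff, Subtype.image_preimage_coe]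
  subst hXrange
  exact isCompact_range_inter_snd_preimage (by fun_prop) hB hKpos hK
end

section
/- Let β(1), …, β(r) ∈ ℤ^N be linearly independent over ℚ, and define G : U → ℂ^r on the open set U := {y ∈ ℂ^N : y_j ≠ 0 for all j} by G(y)_i = ∏_{j=1}^N y_j^{β_j(i)} (integer powers). Then G is differentiable on U and at every point y ∈ U the Fréchet derivative of G is a surjective ℂ-linear map from ℂ^N to ℂ^r; that is, G is a submersion at every point of the algebraic torus. -/
/-!
The partial derivative of the monomial `y ^ b` in `y j` is `b j * y ^ b / y j`, so the derivative
of `G` at `y` is `diag (G y) ∘ B ∘ diag y⁻¹`, where `B` is the exponent matrix. On the torus both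
diagonal factors are invertible, and `B : ℂ^N → ℂ^r` is surjective because the `ℚ`-linear
independence of its rows survives the base change to `ℂ`.
-/

open Function

theorem Matrix.mulVec_surjective_of_linearIndependent_row {K m n : Type*} [Field K]
    [Fintype m] [Fintype n] {A : Matrix m n K} (h : LinearIndependent K A.row) :
    Surjective A.mulVec :=
  LinearMap.range_eq_top.mp <| Submodule.eq_top_of_finrank_eq <| by
    change A.rank = _
    rw [h.rank_matrix, Module.finrank_fintype_fun_eq_card]

theorem hasFDerivAt_prod_zpow {𝕜 ι : Type*} [NontriviallyNormedField 𝕜] [Fintype ι]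
    (b : ι → ℤ) {y : ι → 𝕜} (hy : ∀ j, y j ≠ 0) :
    HasFDerivAt (fun z : ι → 𝕜 => ∏ j, z j ^ b j)
      ((∏ j, y j ^ b j) •
        ∑ j, ((b j : 𝕜) / y j) • (ContinuousLinearMap.proj j : (ι → 𝕜) →L[𝕜] 𝕜)) y := by
  classical
  have hfactor : ∀ j, (∏ k ∈ Finset.univ.erase j, y k ^ b k) * ((b j : 𝕜) * y j ^ (b j - 1)) =
      (∏ k, y k ^ b k) * ((b j : 𝕜) / y j) := fun j => by
    rw [← Finset.mul_prod_erase _ _ (Finset.mem_univ j), zpow_sub_one₀ (hy j)]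
    ring
  have h := HasFDerivAt.finsetProd (u := Finset.univ) (x := y) (g := fun j z => z j ^ b j)
    (g' := fun j => ((b j : 𝕜) * y j ^ (b j - 1)) • (ContinuousLinearMap.proj j : (ι → 𝕜) →L[𝕜] 𝕜))
    fun j _ => (hasDerivAt_zpow (b j) (y j) (.inl (hy j))).comp_hasFDerivAt y
      (ContinuousLinearMap.proj j : (ι → 𝕜) →L[𝕜] 𝕜).hasFDerivAt
  refine h.congr_fderiv ?_
  simp only [Finset.smul_sum, smul_smul, hfactor]

theorem surjective_pi_smul_sum_div_smul_proj {𝕜 ι κ : Type*} [NontriviallyNormedField 𝕜]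
    [Fintype ι] {A : Matrix κ ι 𝕜} (hA : Surjective A.mulVec) {c : κ → 𝕜} (hc : ∀ i, c i ≠ 0)
    {y : ι → 𝕜} (hy : ∀ j, y j ≠ 0) :
    Surjective (ContinuousLinearMap.pi fun i =>
      c i • ∑ j, (A i j / y j) • (ContinuousLinearMap.proj j : (ι → 𝕜) →L[𝕜] 𝕜)) := by
  intro w
  obtain ⟨u, hu⟩ := hA fun i => w i / c i
  refine ⟨fun j => y j * u j, funext fun i => ?_⟩
  have hcancel : ∀ j, A i j / y j * (y j * u j) = A i j * u j := fun j => by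
    field_simp [hy j]
  simp only [ContinuousLinearMap.coe_pi', smul_apply, sum_apply, ContinuousLinearMap.proj_apply,
    smul_eq_mul, hcancel]
  have hrow : ∑ j, A i j * u j = w i / c i := congr_fun hu i
  rw [hrow, mul_div_cancel₀ _ (hc i)]

/-- Let `β 1, …, β r ∈ ℤ^N` be linearly independent over `ℚ` and define
`G : U → ℂ^r` on `U = {y : ∀ j, y j ≠ 0}` by `G(y) i = ∏ j, y j ^ β i j`.  Then `G` is
differentiable on `U` and at every point of `U` its Fréchet derivative is a surjective
`ℂ`-linear map `ℂ^N → ℂ^r`; i.e. `G` is a submersion at every point of the torus. -/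
theorem stmt14 (N r : ℕ) (β : Fin r → Fin N → ℤ)
    (hβ : LinearIndependent ℚ fun i => fun j => (β i j : ℚ))
    (G : (Fin N → ℂ) → (Fin r → ℂ))
    (hG : G = fun y => fun i => ∏ j, y j ^ β i j) :
    DifferentiableOn ℂ G {y | ∀ j, y j ≠ 0} ∧
    ∀ y : Fin N → ℂ, (∀ j, y j ≠ 0) →
      DifferentiableAt ℂ G y ∧ Function.Surjective (fderiv ℂ G y) := by
  subst hG
  have hderiv : ∀ y : Fin N → ℂ, (∀ j, y j ≠ 0) → HasFDerivAt (fun y i => ∏ j, y j ^ β i j)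
      (ContinuousLinearMap.pi fun i => (∏ j, y j ^ β i j) •
        ∑ j, ((β i j : ℂ) / y j) • (ContinuousLinearMap.proj j : (Fin N → ℂ) →L[ℂ] ℂ)) y :=
    fun y hy => hasFDerivAt_pi.mpr fun i => hasFDerivAt_prod_zpow (β i) hy
  have hrows : LinearIndependent ℂ (Matrix.of fun i j => (β i j : ℂ)).row := by
    have hcast : (Matrix.of fun i j => (β i j : ℂ)).row =
        fun i => algebraMap ℚ ℂ ∘ fun j => (β i j : ℚ) := by
      ext; simp
    rw [hcast]
    exact linearIndependent_algebraMap_comp_iff.mpr hβ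
  refine ⟨fun y hy => (hderiv y hy).differentiableAt.differentiableWithinAt,
    fun y hy => ⟨(hderiv y hy).differentiableAt, ?_⟩⟩
  rw [(hderiv y hy).fderiv]
  exact surjective_pi_smul_sum_div_smul_proj (A := Matrix.of fun i j => (β i j : ℂ))
    (Matrix.mulVec_surjective_of_linearIndependent_row hrows)
    (fun i => Finset.prod_ne_zero_iff.mpr fun j _ => zpow_ne_zero _ (hy j)) hy
end
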